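/- Let η > 0, α > 2, χ > 0, and sP χ^{-α} < 1. Then ∫_χ^∞ x (1 - e^{-ηx}) (1 - 1/(1 + sPx^{-α})) dx = -Σ_{n=1}^∞ (-sP)^n [ χ^{2-nα}/(nα - 2) - η^{nα-2} Γ(2 - nα, ηχ) ], with absolute convergence of the series. -/

import Mathlib

open MeasureTheory Real Set

noncomputable def upperGamma (a y : ℝ) : ℝ := ∫ t in Set.Ioi y, t ^ (a - 1) * Real.exp (-t)

lemma upperGamma_nonneg {a y : ℝ} (hy : 0 < y) : 0 ≤ upperGamma a y := by
  apply setIntegral_nonneg measurableSet_Ioi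
  intro t ht
  have h0 : 0 < t := hy.trans ht
  positivity

lemma aux_integrable_exp (β η χ : ℝ) (hβ : 2 < β) (hη : 0 < η) (hχ : 0 < χ) :
    IntegrableOn (fun x => x ^ (1 - β) * Real.exp (-(η * x))) (Set.Ioi χ) := by
  have h1 : IntegrableOn (fun x : ℝ => x ^ (1 - β)) (Set.Ioi χ) :=
    integrableOn_Ioi_rpow_of_lt (by linarith) hχ
  refine Integrable.mono h1 ?_ ?_
  · apply Measurable.aestronglyMeasurable
    fun_prop
  · filter_upwards [ae_restrict_mem measurableSet_Ioi] with x hx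
    have hx0 : 0 < x := hχ.trans hx
    have he : Real.exp (-(η * x)) ≤ 1 := by
      rw [← Real.exp_zero]
      exact Real.exp_le_exp.mpr (by nlinarith)
    simp only [Real.norm_eq_abs, abs_mul, Real.abs_exp,
      abs_of_nonneg (Real.rpow_nonneg hx0.le (1 - β))]
    nlinarith [Real.rpow_nonneg hx0.le (1 - β), Real.exp_pos (-(η * x))]

lemma aux_val_exp (β η χ : ℝ) (hβ : 2 < β) (hη : 0 < η) (hχ : 0 < χ) :
    (∫ x in Set.Ioi χ, x ^ (1 - β) * Real.exp (-(η * x)))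
      = η ^ (β - 2) * upperGamma (2 - β) (η * χ) := by
  have h := integral_comp_mul_left_Ioi (fun t => t ^ (1 - β) * Real.exp (-t)) χ hη
  have h2 : (∫ x in Set.Ioi χ, (η * x) ^ (1 - β) * Real.exp (-(η * x)))
      = η ^ (1 - β) * ∫ x in Set.Ioi χ, x ^ (1 - β) * Real.exp (-(η * x)) := by
    rw [← MeasureTheory.integral_const_mul]
    refine setIntegral_congr_fun measurableSet_Ioi fun x hx => ?_
    have hx0 : 0 < x := hχ.trans hx
    rw [Real.mul_rpow hη.le hx0.le]
    ring
  have hG : upperGamma (2 - β) (η * χ) = ∫ t in Set.Ioi (η * χ), t ^ (1 - β) * Real.exp (-t) := by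
    rw [upperGamma, show (2:ℝ) - β - 1 = 1 - β from by ring]
  simp only [smul_eq_mul] at h
  rw [h2, ← hG] at h
  have e1 : η ^ (β - 1) * η ^ (1 - β) = 1 := by
    rw [← Real.rpow_add hη, show β - 1 + (1 - β) = 0 from by ring, Real.rpow_zero]
  have e2 : η ^ (β - 1) * η⁻¹ = η ^ (β - 2) := by
    rw [← Real.rpow_neg_one η, ← Real.rpow_add hη, show β - 1 + (-1) = β - 2 from by ring]
  calc (∫ x in Set.Ioi χ, x ^ (1 - β) * Real.exp (-(η * x)))
      = (η ^ (β - 1) * η ^ (1 - β)) * ∫ x in Set.Ioi χ, x ^ (1 - β) * Real.exp (-(η * x)) := by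
        rw [e1, one_mul]
    _ = η ^ (β - 1) * (η ^ (1 - β) * ∫ x in Set.Ioi χ, x ^ (1 - β) * Real.exp (-(η * x))) := by
        ring
    _ = η ^ (β - 1) * (η⁻¹ * upperGamma (2 - β) (η * χ)) := by rw [h]
    _ = η ^ (β - 2) * upperGamma (2 - β) (η * χ) := by rw [← mul_assoc, e2]

lemma aux_integrable (β η χ : ℝ) (hβ : 2 < β) (hη : 0 < η) (hχ : 0 < χ) :
    IntegrableOn (fun x => x ^ (1 - β) * (1 - Real.exp (-(η * x)))) (Set.Ioi χ) := by
  have h1 : IntegrableOn (fun x : ℝ => x ^ (1 - β)) (Set.Ioi χ) :=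
    integrableOn_Ioi_rpow_of_lt (by linarith) hχ
  have h2 := aux_integrable_exp β η χ hβ hη hχ
  refine (h1.sub h2).congr ?_
  exact Filter.Eventually.of_forall fun x => by simp [Pi.sub_apply]; ring

lemma aux_val (β η χ : ℝ) (hβ : 2 < β) (hη : 0 < η) (hχ : 0 < χ) :
    (∫ x in Set.Ioi χ, x ^ (1 - β) * (1 - Real.exp (-(η * x))))
      = χ ^ (2 - β) / (β - 2) - η ^ (β - 2) * upperGamma (2 - β) (η * χ) := by
  have h1 : IntegrableOn (fun x : ℝ => x ^ (1 - β)) (Set.Ioi χ) :=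
    integrableOn_Ioi_rpow_of_lt (by linarith) hχ
  have h2 := aux_integrable_exp β η χ hβ hη hχ
  have heq : (∫ x in Set.Ioi χ, x ^ (1 - β) * (1 - Real.exp (-(η * x))))
      = ∫ x in Set.Ioi χ, (x ^ (1 - β) - x ^ (1 - β) * Real.exp (-(η * x))) := by
    refine setIntegral_congr_fun measurableSet_Ioi fun x _ => ?_
    ring
  rw [heq, integral_sub h1 h2, integral_Ioi_rpow_of_lt (by linarith) hχ,
    aux_val_exp β η χ hβ hη hχ, show (1 : ℝ) - β + 1 = 2 - β from by ring,
    neg_div, ← div_neg, neg_sub]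

lemma aux_nonneg (β η χ : ℝ) (hη : 0 < η) (hχ : 0 < χ) :
    0 ≤ ∫ x in Set.Ioi χ, x ^ (1 - β) * (1 - Real.exp (-(η * x))) := by
  refine setIntegral_nonneg measurableSet_Ioi fun x hx => ?_
  have hx0 : 0 < x := hχ.trans hx
  have he : Real.exp (-(η * x)) ≤ 1 := by
    rw [← Real.exp_zero]
    exact Real.exp_le_exp.mpr (by nlinarith)
  exact mul_nonneg (Real.rpow_nonneg hx0.le _) (by linarith)

lemma aux_ub (β η χ : ℝ) (hβ : 2 < β) (hη : 0 < η) (hχ : 0 < χ) :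
    (∫ x in Set.Ioi χ, x ^ (1 - β) * (1 - Real.exp (-(η * x))))
      ≤ χ ^ (2 - β) / (β - 2) := by
  rw [aux_val β η χ hβ hη hχ]
  have h1 : 0 ≤ η ^ (β - 2) * upperGamma (2 - β) (η * χ) :=
    mul_nonneg (Real.rpow_nonneg hη.le _) (upperGamma_nonneg (mul_pos hη hχ))
  linarith

noncomputable def brk (η α χ : ℝ) (n : ℕ) : ℝ :=
  χ ^ (2 - ((n : ℝ) + 1) * α) / (((n : ℝ) + 1) * α - 2)
    - η ^ (((n : ℝ) + 1) * α - 2) * upperGamma (2 - ((n : ℝ) + 1) * α) (η * χ)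

/-- Closed form of the same-layer NLoS interference exponent:
`∫_χ^∞ x (1-e^{-ηx})(1 - 1/(1+sPx^{-α})) dx
  = -Σ_{n≥1} (-sP)^n [χ^{2-nα}/(nα-2) - η^{nα-2} Γ(2-nα, ηχ)]`,
with absolute convergence. -/
theorem stmt7 (η α χ s Pt : ℝ) (hη : 0 < η) (hα : 2 < α) (hχ : 0 < χ)
    (hs : 0 < s) (hPt : 0 < Pt) (hlt : s * Pt * χ ^ (-α) < 1) :
    (∫ x in Set.Ioi χ, x * (1 - Real.exp (-(η * x))) * (1 - (1 + s * Pt * x ^ (-α))⁻¹))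
      = -∑' n : ℕ, (-(s * Pt)) ^ (n + 1)
          * (χ ^ (2 - ((n : ℝ) + 1) * α) / (((n : ℝ) + 1) * α - 2)
              - η ^ (((n : ℝ) + 1) * α - 2) * upperGamma (2 - ((n : ℝ) + 1) * α) (η * χ))
    ∧ Summable (fun n : ℕ => ‖(-(s * Pt)) ^ (n + 1)
          * (χ ^ (2 - ((n : ℝ) + 1) * α) / (((n : ℝ) + 1) * α - 2)
              - η ^ (((n : ℝ) + 1) * α - 2) * upperGamma (2 - ((n : ℝ) + 1) * α) (η * χ))‖) := by
  have hc : 0 < s * Pt := mul_pos hs hPt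
  set c := s * Pt with hcdef
  show (∫ x in Set.Ioi χ, x * (1 - Real.exp (-(η * x))) * (1 - (1 + c * x ^ (-α))⁻¹))
      = -∑' n : ℕ, (-c) ^ (n + 1) * brk η α χ n
    ∧ Summable (fun n : ℕ => ‖(-c) ^ (n + 1) * brk η α χ n‖)
  have hq0 : 0 < c * χ ^ (-α) := mul_pos hc (Real.rpow_pos_of_pos hχ _)
  have hq1 : c * χ ^ (-α) < 1 := hlt
  have hα2 : (0 : ℝ) < α - 2 := by linarith
  have hβ : ∀ n : ℕ, 2 < ((n : ℝ) + 1) * α := by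
    intro n
    have h1 : (1 : ℝ) ≤ (n : ℝ) + 1 := by
      have := Nat.cast_nonneg (α := ℝ) n; linarith
    nlinarith
  have hval : ∀ n : ℕ, (∫ x in Set.Ioi χ,
      x ^ (1 - ((n : ℝ) + 1) * α) * (1 - Real.exp (-(η * x)))) = brk η α χ n :=
    fun n => aux_val _ η χ (hβ n) hη hχ
  have hBnn : ∀ n, 0 ≤ brk η α χ n := fun n => (hval n) ▸ aux_nonneg _ η χ hη hχ
  have hBle : ∀ n, brk η α χ n ≤ χ ^ (2 - ((n : ℝ) + 1) * α) / (((n : ℝ) + 1) * α - 2) :=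
    fun n => (hval n) ▸ aux_ub _ η χ (hβ n) hη hχ
  have hχpow : ∀ n : ℕ, χ ^ (2 - ((n : ℝ) + 1) * α) = χ ^ (2 : ℝ) * (χ ^ (-α)) ^ (n + 1) := by
    intro n
    rw [← Real.rpow_natCast (χ ^ (-α)) (n + 1), ← Real.rpow_mul hχ.le, ← Real.rpow_add hχ]
    congr 1
    push_cast
    ring
  have hkey : ∀ n : ℕ, c ^ (n + 1) * (χ ^ (2 - ((n : ℝ) + 1) * α) / (((n : ℝ) + 1) * α - 2))
      ≤ (χ ^ (2 : ℝ) / (α - 2)) * (c * χ ^ (-α)) ^ (n + 1) := by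
    intro n
    have hD : α - 2 ≤ ((n : ℝ) + 1) * α - 2 := by
      have h1 : (1 : ℝ) ≤ (n : ℝ) + 1 := by
        have := Nat.cast_nonneg (α := ℝ) n; linarith
      nlinarith
    have hdiv : χ ^ (2 : ℝ) / (((n : ℝ) + 1) * α - 2) ≤ χ ^ (2 : ℝ) / (α - 2) :=
      div_le_div_of_nonneg_left (Real.rpow_nonneg hχ.le _) hα2 hD
    calc c ^ (n + 1) * (χ ^ (2 - ((n : ℝ) + 1) * α) / (((n : ℝ) + 1) * α - 2))
        = (χ ^ (2 : ℝ) / (((n : ℝ) + 1) * α - 2)) * (c ^ (n + 1) * (χ ^ (-α)) ^ (n + 1)) := by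
          rw [hχpow n]; ring
      _ ≤ (χ ^ (2 : ℝ) / (α - 2)) * (c ^ (n + 1) * (χ ^ (-α)) ^ (n + 1)) := by
          apply mul_le_mul_of_nonneg_right hdiv
          positivity
      _ = (χ ^ (2 : ℝ) / (α - 2)) * (c * χ ^ (-α)) ^ (n + 1) := by rw [← mul_pow]
  have hgeom : Summable (fun n : ℕ => (χ ^ (2 : ℝ) / (α - 2)) * (c * χ ^ (-α)) ^ (n + 1)) := by
    apply Summable.mul_left
    have := (summable_geometric_of_lt_one hq0.le hq1).mul_right (c * χ ^ (-α))
    simpa [pow_succ] using this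
  have hsumc : Summable (fun n : ℕ => c ^ (n + 1) * brk η α χ n) := by
    refine Summable.of_nonneg_of_le
      (fun n => mul_nonneg (pow_nonneg hc.le _) (hBnn n)) (fun n => ?_) hgeom
    exact le_trans (mul_le_mul_of_nonneg_left (hBle n) (pow_nonneg hc.le _)) (hkey n)
  have hnormeq : ∀ n : ℕ, ‖(-c) ^ (n + 1) * brk η α χ n‖ = c ^ (n + 1) * brk η α χ n := by
    intro n
    rw [Real.norm_eq_abs, abs_mul, abs_pow, abs_neg, abs_of_pos hc, abs_of_nonneg (hBnn n)]
  have hint : ∀ n : ℕ, Integrable (fun x => (-1 : ℝ) ^ n * c ^ (n + 1) *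
      (x ^ (1 - ((n : ℝ) + 1) * α) * (1 - Real.exp (-(η * x))))) (volume.restrict (Set.Ioi χ)) :=
    fun n => (aux_integrable _ η χ (hβ n) hη hχ).const_mul _
  have hFnorm : ∀ n : ℕ, (∫ x in Set.Ioi χ, ‖(-1 : ℝ) ^ n * c ^ (n + 1) *
      (x ^ (1 - ((n : ℝ) + 1) * α) * (1 - Real.exp (-(η * x))))‖) = c ^ (n + 1) * brk η α χ n := by
    intro n
    have h1 : ∀ x ∈ Set.Ioi χ, ‖(-1 : ℝ) ^ n * c ^ (n + 1) *
        (x ^ (1 - ((n : ℝ) + 1) * α) * (1 - Real.exp (-(η * x))))‖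
        = c ^ (n + 1) * (x ^ (1 - ((n : ℝ) + 1) * α) * (1 - Real.exp (-(η * x)))) := by
      intro x hx
      have hx0 : 0 < x := hχ.trans hx
      have he : Real.exp (-(η * x)) ≤ 1 := by
        rw [← Real.exp_zero]; exact Real.exp_le_exp.mpr (by nlinarith)
      have hg0 : 0 ≤ x ^ (1 - ((n : ℝ) + 1) * α) * (1 - Real.exp (-(η * x))) :=
        mul_nonneg (Real.rpow_nonneg hx0.le _) (by linarith)
      rw [Real.norm_eq_abs, abs_mul, abs_mul, abs_pow, abs_neg, abs_one, one_pow, one_mul,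
        abs_of_pos (pow_pos hc _), abs_of_nonneg hg0]
    rw [setIntegral_congr_fun measurableSet_Ioi h1, MeasureTheory.integral_const_mul, hval n]
  have hFsum : Summable (fun n : ℕ => ∫ x in Set.Ioi χ, ‖(-1 : ℝ) ^ n * c ^ (n + 1) *
      (x ^ (1 - ((n : ℝ) + 1) * α) * (1 - Real.exp (-(η * x))))‖) :=
    hsumc.congr fun n => (hFnorm n).symm
  have hswap : (∑' n : ℕ, ∫ x in Set.Ioi χ, (-1 : ℝ) ^ n * c ^ (n + 1) *
        (x ^ (1 - ((n : ℝ) + 1) * α) * (1 - Real.exp (-(η * x)))))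
      = ∫ x in Set.Ioi χ, ∑' n : ℕ, (-1 : ℝ) ^ n * c ^ (n + 1) *
        (x ^ (1 - ((n : ℝ) + 1) * α) * (1 - Real.exp (-(η * x)))) :=
    MeasureTheory.integral_tsum_of_summable_integral_norm hint hFsum
  have hpt : ∀ x ∈ Set.Ioi χ, (∑' n : ℕ, (-1 : ℝ) ^ n * c ^ (n + 1) *
        (x ^ (1 - ((n : ℝ) + 1) * α) * (1 - Real.exp (-(η * x)))))
      = x * (1 - Real.exp (-(η * x))) * (1 - (1 + c * x ^ (-α))⁻¹) := by
    intro x hx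
    have hx0 : 0 < x := hχ.trans hx
    have hu0 : 0 < c * x ^ (-α) := mul_pos hc (Real.rpow_pos_of_pos hx0 _)
    have hu1 : c * x ^ (-α) < 1 := by
      have h1 : x ^ (-α) ≤ χ ^ (-α) :=
        Real.rpow_le_rpow_of_nonpos hχ (le_of_lt hx) (by linarith)
      nlinarith
    have hxp : ∀ n : ℕ, x ^ (1 - ((n : ℝ) + 1) * α) = x * (x ^ (-α)) ^ (n + 1) := by
      intro n
      rw [show (1 : ℝ) - ((n : ℝ) + 1) * α = 1 + (-α) * ((n + 1 : ℕ) : ℝ) from by push_cast; ring,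
        Real.rpow_add hx0, Real.rpow_one, ← Real.rpow_natCast (x ^ (-α)) (n + 1),
        ← Real.rpow_mul hx0.le]
    have hFx : ∀ n : ℕ, (-1 : ℝ) ^ n * c ^ (n + 1) *
        (x ^ (1 - ((n : ℝ) + 1) * α) * (1 - Real.exp (-(η * x))))
        = (x * (1 - Real.exp (-(η * x)))) * (-((-(c * x ^ (-α))) ^ (n + 1))) := by
      intro n
      rw [hxp n, neg_pow (c * x ^ (-α)), mul_pow, pow_succ (-1 : ℝ)]
      ring
    rw [tsum_congr hFx, tsum_mul_left, tsum_neg]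
    have hgeo : ∑' n : ℕ, (-(c * x ^ (-α))) ^ (n + 1)
        = (-(c * x ^ (-α))) * (1 - (-(c * x ^ (-α))))⁻¹ := by
      calc ∑' n : ℕ, (-(c * x ^ (-α))) ^ (n + 1)
          = ∑' n : ℕ, (-(c * x ^ (-α))) * (-(c * x ^ (-α))) ^ n :=
            tsum_congr fun n => by rw [pow_succ']
        _ = (-(c * x ^ (-α))) * ∑' n : ℕ, (-(c * x ^ (-α))) ^ n := tsum_mul_left
        _ = (-(c * x ^ (-α))) * (1 - (-(c * x ^ (-α))))⁻¹ := by
            rw [tsum_geometric_of_norm_lt_one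
              (by rw [norm_neg, Real.norm_eq_abs, abs_of_pos hu0]; exact hu1)]
    rw [hgeo]
    have hne : (1 : ℝ) + c * x ^ (-α) ≠ 0 := by positivity
    field_simp
    rw [sub_neg_eq_add, mul_div_assoc, div_self hne]
    ring
  constructor
  · have hLHS : (∫ x in Set.Ioi χ, x * (1 - Real.exp (-(η * x))) * (1 - (1 + c * x ^ (-α))⁻¹))
        = ∫ x in Set.Ioi χ, ∑' n : ℕ, (-1 : ℝ) ^ n * c ^ (n + 1) *
          (x ^ (1 - ((n : ℝ) + 1) * α) * (1 - Real.exp (-(η * x)))) :=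
      setIntegral_congr_fun measurableSet_Ioi fun x hx => (hpt x hx).symm
    rw [hLHS, ← hswap]
    have hterm : ∀ n : ℕ, (∫ x in Set.Ioi χ, (-1 : ℝ) ^ n * c ^ (n + 1) *
          (x ^ (1 - ((n : ℝ) + 1) * α) * (1 - Real.exp (-(η * x)))))
        = -((-c) ^ (n + 1) * brk η α χ n) := by
      intro n
      rw [MeasureTheory.integral_const_mul, hval n, neg_pow c, pow_succ (-1 : ℝ)]
      ring
    rw [tsum_congr hterm, tsum_neg]
  · refine Summable.of_nonneg_of_le (fun n => norm_nonneg _) (fun n => ?_) hgeom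
    rw [hnormeq n]
    exact le_trans (mul_le_mul_of_nonneg_left (hBle n) (pow_nonneg hc.le _)) (hkey n)
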